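/- arXiv:math/0210208 — 2 statements merged into one kernel-verified Lean document; each statement's English description precedes it below -/
import Mathlib

section
/- For positive integers n, p, k with k ≤ n, the number (n choose k) · Σ_{r≥0} C(p,r)·C(n-p,r)·C(k-1,r)/C(n-1,r) equals (n/k) · Σ_{r≥0} C(p,r)·C(n-p,r)·C(n-r-1,k-r-1). -/
open Finset

/-- Binomial coefficient `C(a,b)` for integers, with `C(a,b) = 0` unless `0 ≤ b ≤ a`. -/
def C (a b : ℤ) : ℚ := if 0 ≤ b ∧ b ≤ a then (Nat.choose a.toNat b.toNat : ℚ) else 0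

/-- `B(n,p,k) = (n/k) · Σ_{r≥0} C(p,r)·C(n-p,r)·C(n-r-1,k-r-1)`. -/
def B (n p k : ℕ) : ℚ :=
  ((n : ℚ) / k) * ∑ r ∈ range (n + 1),
    C p r * C ((n : ℤ) - p) r * C ((n : ℤ) - r - 1) ((k : ℤ) - r - 1)

/-!
The identity holds term by term in `r`. For `r < k` the absorption identity
`n C(n-1,k-1) = k C(n,k)` and the trinomial revision
`C(n-1,k-1) C(k-1,r) = C(n-1,r) C(n-1-r,k-1-r)` combine to
`C(n,k) C(k-1,r) / C(n-1,r) = (n/k) C(n-r-1,k-r-1)`; for `r ≥ k` both terms vanish.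
-/

lemma C_natCast {a b : ℕ} (h : b ≤ a) : C a b = a.choose b := by
  simp [C, h]

lemma C_eq_zero_of_lt {a b : ℤ} (h : a < b) : C a b = 0 :=
  if_neg fun hb => (hb.2.trans_lt h).false

lemma C_eq_zero_of_neg {a b : ℤ} (h : b < 0) : C a b = 0 :=
  if_neg fun hb => (hb.1.trans_lt h).false

lemma Nat.choose_succ_succ_mul_choose_mul {m j r : ℕ} (hrj : r ≤ j) :
    (m + 1).choose (j + 1) * j.choose r * (j + 1) =
      (m + 1) * (m - r).choose (j - r) * m.choose r := by
  rw [mul_right_comm, ← Nat.add_one_mul_choose_eq, mul_assoc, Nat.choose_mul hrj]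
  ring

lemma choose_succ_mul_choose_div_choose {m j r : ℕ} (hjm : j ≤ m) (hrj : r ≤ j) :
    ((m + 1).choose (j + 1) : ℚ) * (j.choose r / m.choose r) =
      (m + 1) / (j + 1) * (m - r).choose (j - r) := by
  have hm : (m.choose r : ℚ) ≠ 0 := by exact_mod_cast (Nat.choose_pos (hrj.trans hjm)).ne'
  rw [← mul_div_assoc, div_mul_eq_mul_div, div_eq_div_iff hm (by positivity)]
  exact_mod_cast Nat.choose_succ_succ_mul_choose_mul hrj

lemma choose_mul_C_div_C {n k : ℕ} (hk : 1 ≤ k) (hkn : k ≤ n) (r : ℕ) :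
    (n.choose k : ℚ) * (C ((k : ℤ) - 1) r / C ((n : ℤ) - 1) r) =
      n / k * C ((n : ℤ) - r - 1) ((k : ℤ) - r - 1) := by
  obtain ⟨j, rfl⟩ : ∃ j, k = j + 1 := ⟨k - 1, by omega⟩
  obtain ⟨m, rfl⟩ : ∃ m, n = m + 1 := ⟨n - 1, by omega⟩
  have hjm : j ≤ m := by omega
  by_cases hrj : r ≤ j
  · have hm : ((m + 1 : ℕ) : ℤ) - r - 1 = ((m - r : ℕ) : ℤ) := by omega
    have hj : ((j + 1 : ℕ) : ℤ) - r - 1 = ((j - r : ℕ) : ℤ) := by omega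
    rw [hm, hj, Nat.cast_succ, Nat.cast_succ, add_sub_cancel_right, add_sub_cancel_right,
      C_natCast hrj, C_natCast (hrj.trans hjm), C_natCast (Nat.sub_le_sub_right hjm r)]
    exact_mod_cast choose_succ_mul_choose_div_choose hjm hrj
  · rw [C_eq_zero_of_lt (a := (j + 1 : ℕ) - 1) (by omega),
      C_eq_zero_of_neg (b := (j + 1 : ℕ) - r - 1) (by omega)]
    simp

theorem stmt_0_general (n p k : ℕ) (hk : 1 ≤ k) (hkn : k ≤ n) :
    (Nat.choose n k : ℚ) * ∑ r ∈ range (n + 1),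
      C p r * C ((n : ℤ) - p) r * (C ((k : ℤ) - 1) r / C ((n : ℤ) - 1) r) =
    ((n : ℚ) / k) * ∑ r ∈ range (n + 1),
      C p r * C ((n : ℤ) - p) r * C ((n : ℤ) - r - 1) ((k : ℤ) - r - 1) := by
  rw [mul_sum, mul_sum]
  refine sum_congr rfl fun r _ => ?_
  rw [mul_left_comm, choose_mul_C_div_C hk hkn, mul_left_comm]

theorem stmt_0 (n p k : ℕ) (hk : 1 ≤ k) (hkn : k ≤ n) (hp : p ≤ n) :
    (Nat.choose n k : ℚ) * ∑ r ∈ range (n + 1),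
      C p r * C ((n : ℤ) - p) r * (C ((k : ℤ) - 1) r / C ((n : ℤ) - 1) r) =
    ((n : ℚ) / k) * ∑ r ∈ range (n + 1),
      C p r * C ((n : ℤ) - p) r * C ((n : ℤ) - r - 1) ((k : ℤ) - r - 1) :=
  stmt_0_general n p k hk hkn
end

section
/- For positive integers n, p with 0 ≤ p ≤ n and n ≥ 2, B(n,p,2) = (n/2)·(n - 1 + p·(n-p)), where B(n,p,k) = (n/k) · Σ_{r≥0} C(p,r)·C(n-p,r)·C(n-r-1,k-r-1). -/
open Finset

lemma C_zero (a : ℤ) (h : 0 ≤ a) : C a 0 = 1 := by simp [C, h]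

lemma C_one (a : ℤ) (h : 0 ≤ a) : C a 1 = (a : ℚ) := by
  by_cases h1 : 1 ≤ a
  · simp only [C]
    rw [if_pos ⟨by norm_num, h1⟩]
    rw [show (1 : ℤ).toNat = 1 from rfl, Nat.choose_one_right]
    norm_cast
    omega
  · have ha : a = 0 := by omega
    subst ha
    simp [C]

theorem stmt_6 (n p : ℕ) (hn : 2 ≤ n) (hp : p ≤ n) :
    B n p 2 = ((n : ℚ) / 2) * ((n : ℚ) - 1 + (p : ℚ) * ((n : ℚ) - p)) := by
  unfold B
  congr 1
  have hsub : range 2 ⊆ range (n + 1) := by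
    apply Finset.range_subset_range.2; omega
  rw [← Finset.sum_subset hsub]
  · rw [Finset.sum_range_succ, Finset.sum_range_one]
    norm_num
    rw [C_zero _ (by positivity), C_zero _ (by omega), C_zero _ (by omega),
      C_one _ (by omega), C_one _ (by omega), C_one _ (by omega)]
    push_cast
    ring
  · intro r hr hr2
    simp only [Finset.mem_range] at hr hr2
    have h : ¬ (0 ≤ ((2 : ℕ) : ℤ) - r - 1 ∧ ((2 : ℕ) : ℤ) - r - 1 ≤ (n : ℤ) - r - 1) := by
      push_cast; omega
    simp only [C]
    rw [if_neg h, mul_zero]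
end
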